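/- Let F : F_2^n → F_2^n be an APN permutation with F∘A = B∘F, where A, B ∈ GL(n,F_2) have order k for a prime k. Then there is no polynomial of the form X^a + X^b + X^c + 1 in F_2[X]/(X^k+1) with a, b, c distinct and nonzero mod k, that is divisible by both the minimal polynomial of A and the minimal polynomial of B, provided there exists g ∈ F_2^n with ord_A(g) = k. -/

import Mathlib

/-!
Writing `xᵢ = Aⁱ g`, the relation `Aᵃ + Aᵇ + Aᶜ + 1 = 0` gives `x_a + x_b + x_c + g = 0`, and
through `F ∘ A = B ∘ F` the relation `Bᵃ + Bᵇ + Bᶜ + 1 = 0` gives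
`F x_a + F x_b + F x_c + F g = 0`. Since `g` has `A`-period `k` and `a, b, c, 0` are distinct
mod `k`, these are four distinct points, all solving `F x + F (x + α) = F x_a + F x_b` for
`α = x_a + x_b ≠ 0`, which contradicts the APN property.
-/

open Function

def IsAPN {V W : Type*} [AddCommGroup V] [AddCommGroup W] (F : V → W) : Prop :=
  ∀ α : V, α ≠ 0 → ∀ β : W, {x : V | F x + F (x + α) = β}.ncard ≤ 2

section CharTwo

variable {V W : Type*} [AddCommGroup V] [Module (ZMod 2) V] [AddCommGroup W] [Module (ZMod 2) W]

theorem ZModModule.add_add_add_eq_zero_iff (a b c d : V) : a + b + c + d = 0 ↔ a + b = c + d := by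
  rw [add_assoc, add_eq_zero_iff_eq_neg, ZModModule.neg_eq_self]

theorem ZModModule.add_add_cancel_left (a b : V) : a + (a + b) = b := by
  rw [← add_assoc, ZModModule.add_self, zero_add]

theorem IsAPN.false_of_add_add_add_eq_zero [Finite V] {F : V → W} (hF : IsAPN F)
    {x₁ x₂ x₃ x₄ : V} (hx : x₁ + x₂ + x₃ + x₄ = 0) (hFx : F x₁ + F x₂ + F x₃ + F x₄ = 0)
    (h₁₂ : x₁ ≠ x₂) (h₁₃ : x₁ ≠ x₃) (h₁₄ : x₁ ≠ x₄) (h₂₃ : x₂ ≠ x₃) (h₂₄ : x₂ ≠ x₄)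
    (h₃₄ : x₃ ≠ x₄) : False := by
  rw [ZModModule.add_add_add_eq_zero_iff] at hx hFx
  set S := {x : V | F x + F (x + (x₁ + x₂)) = F x₁ + F x₂}
  have hsub : ({x₁, x₂, x₃, x₄} : Set V) ⊆ S := by
    rintro x (rfl | rfl | rfl | rfl) <;> simp only [S, Set.mem_ofPred_eq]
    · rw [ZModModule.add_add_cancel_left]
    · rw [add_comm x₁ x, ZModModule.add_add_cancel_left, add_comm]
    · rw [hx, ZModModule.add_add_cancel_left, hFx]
    · rw [hx, add_comm x₃ x, ZModModule.add_add_cancel_left, hFx, add_comm]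
  have hcard : ({x₁, x₂, x₃, x₄} : Set V).ncard = 4 := by
    rw [Set.ncard_insert_of_notMem (by simp [h₁₂, h₁₃, h₁₄]),
      Set.ncard_insert_of_notMem (by simp [h₂₃, h₂₄]),
      Set.ncard_pair h₃₄]
  have hα : x₁ + x₂ ≠ 0 := by
    rwa [← ZModModule.sub_eq_add, sub_ne_zero]
  have h4 : 4 ≤ S.ncard := hcard ▸ Set.ncard_le_ncard hsub (Set.toFinite S)
  have h2 : S.ncard ≤ 2 := hF _ hα _
  omega

end CharTwo

theorem Function.iterate_eq_iterate_iff_modEq {α : Type*} {f : α → α} {x : α}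
    (hx : x ∈ periodicPts f) {m n : ℕ} :
    f^[m] x = f^[n] x ↔ m ≡ n [MOD minimalPeriod f x] := by
  have hpos := minimalPeriod_pos_of_mem_periodicPts hx
  rw [← iterate_mod_minimalPeriod_eq (n := m), ← iterate_mod_minimalPeriod_eq (n := n)]
  exact iterate_eq_iterate_iff_of_lt_minimalPeriod (Nat.mod_lt _ hpos) (Nat.mod_lt _ hpos)

theorem Matrix.mulVec_pow {n R : Type*} [Fintype n] [DecidableEq n] [CommSemiring R]
    (A : Matrix n n R) (i : ℕ) : (A ^ i).mulVec = A.mulVec^[i] := by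
  induction i with
  | zero => ext v; simp
  | succ i ih => ext v; rw [pow_succ', ← Matrix.mulVec_mulVec, ih, iterate_succ_apply']

theorem stmt_15_general (n : ℕ) (F : (Fin n → ZMod 2) → (Fin n → ZMod 2))
    (hAPN : ∀ α : Fin n → ZMod 2, α ≠ 0 → ∀ β : Fin n → ZMod 2,
      Set.ncard {x : Fin n → ZMod 2 | F x + F (x + α) = β} ≤ 2)
    (A B : Matrix (Fin n) (Fin n) (ZMod 2))
    (k : ℕ) (hk : k.Prime)
    (hcomm : ∀ x, F (A.mulVec x) = B.mulVec (F x))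
    (g : Fin n → ZMod 2)
    (hg : sInf {i : ℕ | 0 < i ∧ (A ^ i).mulVec g = g} = k) :
    ¬ ∃ a b c : ℕ, a % k ≠ 0 ∧ b % k ≠ 0 ∧ c % k ≠ 0 ∧
      a % k ≠ b % k ∧ a % k ≠ c % k ∧ b % k ≠ c % k ∧
      A ^ a + A ^ b + A ^ c + 1 = 0 ∧ B ^ a + B ^ b + B ^ c + 1 = 0 := by
  rintro ⟨a, b, c, ha, hb, hc, hab, hac, hbc, hEA, hEB⟩
  simp only [Matrix.mulVec_pow] at hg
  have hper : minimalPeriod A.mulVec g = k := by rwa [minimalPeriod_eq_sInf_n_pos_IsPeriodicPt]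
  have hg_per : g ∈ periodicPts A.mulVec := minimalPeriod_pos_iff_mem_periodicPts.1 (hper ▸ hk.pos)
  have horbit (i j : ℕ) (hij : ¬ i ≡ j [MOD k]) : (A ^ i).mulVec g ≠ (A ^ j).mulVec g := by
    rwa [Matrix.mulVec_pow, Matrix.mulVec_pow, Ne, iterate_eq_iterate_iff_modEq hg_per, hper]
  have hfix (i : ℕ) (hi : i % k ≠ 0) : (A ^ i).mulVec g ≠ g := by
    simpa using horbit i 0 (by simpa [Nat.ModEq] using hi)
  have hsum (M : Matrix (Fin n) (Fin n) (ZMod 2)) (hM : M ^ a + M ^ b + M ^ c + 1 = 0)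
      (v : Fin n → ZMod 2) : (M ^ a).mulVec v + (M ^ b).mulVec v + (M ^ c).mulVec v + v = 0 := by
    simpa [Matrix.add_mulVec] using congrArg (·.mulVec v) hM
  have hFpow (i : ℕ) : F ((A ^ i).mulVec g) = (B ^ i).mulVec (F g) := by
    simpa only [Matrix.mulVec_pow] using Semiconj.iterate_right hcomm i g
  refine IsAPN.false_of_add_add_add_eq_zero hAPN (hsum A hEA g) ?_ (horbit a b hab)
    (horbit a c hac) (hfix a ha) (horbit b c hbc) (hfix b hb) (hfix c hc)
  rw [hFpow, hFpow, hFpow]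
  exact hsum B hEB (F g)

/-- For an APN permutation `F` with `F ∘ A = B ∘ F`, `A, B` of prime order `k`, and a
point `g` of `A`-order `k`, there is no quadrinomial `X^a + X^b + X^c + 1`
(with `a, b, c` distinct and nonzero mod `k`) annihilating both `A` and `B`. -/
theorem stmt_15 (n : ℕ) (F : (Fin n → ZMod 2) → (Fin n → ZMod 2))
    (hbij : Function.Bijective F)
    (hAPN : ∀ α : Fin n → ZMod 2, α ≠ 0 → ∀ β : Fin n → ZMod 2,
      Set.ncard {x : Fin n → ZMod 2 | F x + F (x + α) = β} ≤ 2)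
    (A B : Matrix (Fin n) (Fin n) (ZMod 2)) (hA : IsUnit A) (hB : IsUnit B)
    (k : ℕ) (hk : k.Prime) (hordA : orderOf A = k) (hordB : orderOf B = k)
    (hcomm : ∀ x, F (A.mulVec x) = B.mulVec (F x))
    (g : Fin n → ZMod 2)
    (hg : sInf {i : ℕ | 0 < i ∧ (A ^ i).mulVec g = g} = k) :
    ¬ ∃ a b c : ℕ, a % k ≠ 0 ∧ b % k ≠ 0 ∧ c % k ≠ 0 ∧
      a % k ≠ b % k ∧ a % k ≠ c % k ∧ b % k ≠ c % k ∧
      A ^ a + A ^ b + A ^ c + 1 = 0 ∧ B ^ a + B ^ b + B ^ c + 1 = 0 :=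
  stmt_15_general n F hAPN A B k hk hcomm g hg
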